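/- Let $f_1,\dots,f_q$ be holomorphic functions on a neighborhood $U$ of $z_0 \in \mathbb{C}$, where $f_l(z)=(z-z_0)^{k_l} g_l(z)$ with $g_l$ nowhere vanishing on $U$ and $k_l \ge 0$. Suppose $W$ is a holomorphic function on $U$ of the form $W = c\,W(f_{\mu(0)},\dots,f_{\mu(n)})$ (a constant multiple of the Wronskian of some $n+1$ of the $f_l$ with $c\ne 0$), and suppose $k_l = 0$ for all $l\notin\{\mu(0),\dots,\mu(n)\}$. Then $W$ vanishes at $z_0$ with order at least $\sum_{l : k_l \ge n} (k_l - n)$, i.e., $\operatorname{ord}_{z_0} W \ge \sum_{l=1}^{q} \max(k_l - n, 0)$. -/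

import Mathlib

/-!
Every entry in column `j` of the Wronskian matrix is a derivative of order at most `n` of
`f (μ j)`, so it vanishes at `z0` to order at least `k (μ j) - n`. Each term of the Leibniz
expansion of the determinant is a product over the columns, hence vanishes to order at least
`∑ j, (k (μ j) - n)`, and this dominates `∑ l, (k l - n)` because `k l = 0` off the range of `μ`.
-/

open Filter Topology

section Order

variable {𝕜 E : Type*} [NontriviallyNormedField 𝕜] [NormedAddCommGroup E] [NormedSpace 𝕜 E]

protected theorem AnalyticAt.iteratedDeriv [CompleteSpace E] {f : 𝕜 → E} {x : 𝕜}
    (hf : AnalyticAt 𝕜 f x) (i : ℕ) : AnalyticAt 𝕜 (iteratedDeriv i f) x :=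
  iteratedDeriv_eq_iterate (𝕜 := 𝕜) (f := f) ▸ hf.iterated_deriv i

theorem AnalyticAt.analyticOrderAt_sub_one_le_deriv [CharZero 𝕜] [CompleteSpace E]
    {f : 𝕜 → E} {x : 𝕜} (hf : AnalyticAt 𝕜 f x) :
    analyticOrderAt f x - 1 ≤ analyticOrderAt (deriv f) x := by
  by_cases hfx : f x = 0
  · have h := hf.analyticOrderAt_deriv_add_one
    simp only [hfx, sub_zero] at h
    exact tsub_le_iff_right.mpr h.ge
  · simp [analyticOrderAt_eq_zero.mpr (.inr hfx)]

theorem AnalyticAt.analyticOrderAt_sub_le_iteratedDeriv [CharZero 𝕜] [CompleteSpace E]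
    {f : 𝕜 → E} {x : 𝕜} (hf : AnalyticAt 𝕜 f x) (i : ℕ) :
    analyticOrderAt f x - i ≤ analyticOrderAt (iteratedDeriv i f) x := by
  induction i with
  | zero => simp
  | succ i ih =>
    calc analyticOrderAt f x - ↑(i + 1) = analyticOrderAt f x - i - 1 := by
          rw [Nat.cast_succ, tsub_tsub]
      _ ≤ analyticOrderAt (iteratedDeriv i f) x - 1 := tsub_le_tsub_right ih 1
      _ ≤ analyticOrderAt (iteratedDeriv (i + 1) f) x := by
          rw [iteratedDeriv_succ]
          exact (hf.iteratedDeriv i).analyticOrderAt_sub_one_le_deriv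

theorem le_analyticOrderAt_sum {ι : Type*} {s : Finset ι} {f : ι → 𝕜 → E} {x : 𝕜}
    {m : ℕ∞} (hf : ∀ i ∈ s, m ≤ analyticOrderAt (f i) x) :
    m ≤ analyticOrderAt (∑ i ∈ s, f i) x := by
  classical
  induction s using Finset.induction_on with
  | empty =>
    have h0 : analyticOrderAt (0 : 𝕜 → E) x = ⊤ := analyticOrderAt_eq_top.mpr (by simp)
    simp [h0]
  | insert i s hi ih =>
    rw [Finset.sum_insert hi]
    refine le_trans ?_ le_analyticOrderAt_add
    simp only [Finset.mem_insert, forall_eq_or_imp] at hf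
    exact le_min hf.1 (ih hf.2)

end Order

section Scalar

variable {𝕜 : Type*} [NontriviallyNormedField 𝕜] {x : 𝕜}

theorem analyticOrderAt_prod {ι : Type*} {s : Finset ι} {f : ι → 𝕜 → 𝕜}
    (hf : ∀ i ∈ s, AnalyticAt 𝕜 (f i) x) :
    analyticOrderAt (∏ i ∈ s, f i) x = ∑ i ∈ s, analyticOrderAt (f i) x := by
  classical
  induction s using Finset.induction_on with
  | empty => simp [Pi.one_def, analyticOrderAt_eq_zero]
  | insert i s hi ih =>
    simp only [Finset.mem_insert, forall_eq_or_imp] at hf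
    rw [Finset.prod_insert hi, Finset.sum_insert hi,
      analyticOrderAt_mul hf.1 (Finset.analyticAt_prod s hf.2), ih hf.2]

theorem le_analyticOrderAt_const_mul {f : 𝕜 → 𝕜} (c : 𝕜) :
    analyticOrderAt f x ≤ analyticOrderAt (fun z => c * f z) x := by
  by_cases hf : AnalyticAt 𝕜 f x
  · rw [show (fun z => c * f z) = (fun _ => c) * f from rfl,
      analyticOrderAt_mul analyticAt_const hf]
    exact le_add_self
  · simp [hf]

variable {n : Type*} [Fintype n] [DecidableEq n] {M : 𝕜 → Matrix n n 𝕜}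

theorem analyticAt_det (hM : ∀ i j, AnalyticAt 𝕜 (fun z => M z i j) x) :
    AnalyticAt 𝕜 (fun z => (M z).det) x := by
  simp_rw [Matrix.det_apply']
  fun_prop

theorem le_analyticOrderAt_det (hM : ∀ i j, AnalyticAt 𝕜 (fun z => M z i j) x)
    (m : n → ℕ∞) (hm : ∀ i j, m j ≤ analyticOrderAt (fun z => M z i j) x) :
    ∑ j, m j ≤ analyticOrderAt (fun z => (M z).det) x := by
  have hdet : (fun z => (M z).det) =
      ∑ σ : Equiv.Perm n, fun z => (Equiv.Perm.sign σ : 𝕜) * ∏ i, M z (σ i) i := by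
    ext z
    simp [Matrix.det_apply']
  rw [hdet]
  refine le_analyticOrderAt_sum fun σ _ => le_trans ?_ (le_analyticOrderAt_const_mul _)
  have hprod : (fun z => ∏ i, M z (σ i) i) = ∏ i, fun z => M z (σ i) i := by
    ext z
    simp
  rw [hprod, analyticOrderAt_prod fun i _ => hM (σ i) i]
  exact Finset.sum_le_sum fun i _ => hm (σ i) i

end Scalar

theorem Finset.sum_le_sum_comp_of_eq_zero_off_range {ι κ M : Type*} [Fintype ι] [Fintype κ]
    [AddCommMonoid M] [PartialOrder M] [IsOrderedAddMonoid M] [CanonicallyOrderedAdd M]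
    (μ : κ → ι) (F : ι → M) (hF : ∀ l, l ∉ Set.range μ → F l = 0) :
    ∑ l, F l ≤ ∑ j, F (μ j) := by
  classical
  calc ∑ l, F l = ∑ l ∈ Finset.univ.image μ, F l :=
        (Finset.sum_subset (Finset.subset_univ _) fun l _ hl => hF l (by simpa using hl)).symm
    _ ≤ ∑ j, F (μ j) := Finset.sum_image_le_of_nonneg fun _ _ => zero_le

theorem stmt_17_general {q n : ℕ} (U : Set ℂ) (hU : IsOpen U) (z0 : ℂ) (hz0 : z0 ∈ U)
    (f g : Fin q → ℂ → ℂ) (k : Fin q → ℕ)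
    (hg : ∀ l, AnalyticOnNhd ℂ (g l) U)
    (hfg : ∀ l, ∀ z ∈ U, f l z = (z - z0) ^ (k l) * g l z)
    (μ : Fin (n+1) → Fin q) (c : ℂ)
    (hout : ∀ l : Fin q, l ∉ Set.range μ → k l = 0)
    (W : ℂ → ℂ)
    (hW : ∀ z, W z =
      c * Matrix.det (Matrix.of fun i j : Fin (n+1) => iteratedDeriv (i : ℕ) (f (μ j)) z)) :
    ∃ u : ℂ → ℂ, AnalyticAt ℂ u z0 ∧
      ∀ᶠ z in nhds z0, W z = (z - z0) ^ (∑ l : Fin q, (k l - n)) * u z := by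
  have hf : ∀ l, AnalyticAt ℂ (f l) z0 ∧ (k l : ℕ∞) ≤ analyticOrderAt (f l) z0 := by
    intro l
    have hga : AnalyticAt ℂ (g l) z0 := hg l z0 hz0
    have hfg' : f l =ᶠ[𝓝 z0] fun z => (z - z0) ^ k l • g l z :=
      eventually_of_mem (hU.mem_nhds hz0) (hfg l)
    have hfa : AnalyticAt ℂ (f l) z0 := (by fun_prop : AnalyticAt ℂ _ z0).congr hfg'.symm
    exact ⟨hfa, (natCast_le_analyticOrderAt hfa).mpr ⟨g l, hga, hfg'⟩⟩
  set M : ℂ → Matrix (Fin (n+1)) (Fin (n+1)) ℂ :=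
    fun z => Matrix.of fun i j => iteratedDeriv i (f (μ j)) z
  have hM : ∀ i j, AnalyticAt ℂ (fun z => M z i j) z0 := fun i j =>
    (hf (μ j)).1.iteratedDeriv i
  have hMord : ∀ i j,
      ((k (μ j) - n : ℕ) : ℕ∞) ≤ analyticOrderAt (fun z => M z i j) z0 := by
    intro i j
    calc ((k (μ j) - n : ℕ) : ℕ∞) ≤ (k (μ j) : ℕ∞) - i := by
          rw [ENat.natCast_sub]
          exact tsub_le_tsub_left (mod_cast i.is_le) _
      _ ≤ analyticOrderAt (f (μ j)) z0 - i := tsub_le_tsub_right (hf _).2 _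
      _ ≤ _ := (hf (μ j)).1.analyticOrderAt_sub_le_iteratedDeriv i
  have hWM : W = fun z => c * (M z).det := funext hW
  have hWa : AnalyticAt ℂ W z0 := hWM ▸ analyticAt_const.mul (analyticAt_det hM)
  have hWord : ((∑ l, (k l - n) : ℕ) : ℕ∞) ≤ analyticOrderAt W z0 := calc
    _ ≤ ((∑ j, (k (μ j) - n) : ℕ) : ℕ∞) := by
        exact_mod_cast Finset.sum_le_sum_comp_of_eq_zero_off_range μ (fun l => k l - n)
          fun l hl => by simp [hout l hl]
    _ = ∑ j, ((k (μ j) - n : ℕ) : ℕ∞) := Nat.cast_sum _ _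
    _ ≤ analyticOrderAt (fun z => (M z).det) z0 := le_analyticOrderAt_det hM _ hMord
    _ ≤ analyticOrderAt W z0 := hWM ▸ le_analyticOrderAt_const_mul c
  obtain ⟨u, hu, hWu⟩ := (natCast_le_analyticOrderAt hWa).mp hWord
  exact ⟨u, hu, by simpa only [smul_eq_mul] using hWu⟩

theorem stmt_17 {q n : ℕ} (U : Set ℂ) (hU : IsOpen U) (z0 : ℂ) (hz0 : z0 ∈ U)
    (f g : Fin q → ℂ → ℂ) (k : Fin q → ℕ)
    (hg : ∀ l, AnalyticOnNhd ℂ (g l) U) (hgz : ∀ l, ∀ z ∈ U, g l z ≠ 0)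
    (hfg : ∀ l, ∀ z ∈ U, f l z = (z - z0) ^ (k l) * g l z)
    (μ : Fin (n+1) → Fin q) (c : ℂ) (hc : c ≠ 0)
    (hout : ∀ l : Fin q, l ∉ Set.range μ → k l = 0)
    (W : ℂ → ℂ)
    (hW : ∀ z, W z =
      c * Matrix.det (Matrix.of fun i j : Fin (n+1) => iteratedDeriv (i : ℕ) (f (μ j)) z)) :
    ∃ u : ℂ → ℂ, AnalyticAt ℂ u z0 ∧
      ∀ᶠ z in nhds z0, W z = (z - z0) ^ (∑ l : Fin q, (k l - n)) * u z :=
  stmt_17_general U hU z0 hz0 f g k hg hfg μ c hout W hW
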